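/- arXiv:0710.1383 — 4 statements merged into one kernel-verified Lean document; each statement's English description precedes it below -/
import Mathlib

section
/- Let d > 1 be an integer, h ∈ [0,1], and let r(h) = c₀ + c₁h + ... + c_{d-2}h^{d-2} be a real polynomial whose coefficients satisfy: there exists l₀ such that c_l > 0 for l ≤ l₀ and c_l ≤ 0 for l > l₀. Then r(h) ≥ h^{l₀} · r(1). -/
/-- Let `d > 1`, `h ∈ [0,1]`, and `r(h) = Σ_{l=0}^{d-2} c_l h^l` a real polynomial whose
coefficients are positive up to some index `l₀` and nonpositive afterwards. Then
`r(h) ≥ h^{l₀} · r(1)`. -/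
theorem poly_sign_change_bound (d : ℕ) (hd : 1 < d) (c : ℕ → ℝ) (l₀ : ℕ)
    (hpos : ∀ l, l ≤ l₀ → 0 < c l) (hneg : ∀ l, l₀ < l → c l ≤ 0)
    (h : ℝ) (hh : h ∈ Set.Icc (0 : ℝ) 1) :
    (∑ l ∈ Finset.range (d - 1), c l * h ^ l) ≥
      h ^ l₀ * ∑ l ∈ Finset.range (d - 1), c l * (1 : ℝ) ^ l := by
  obtain ⟨h0, h1⟩ := hh
  rw [ge_iff_le, Finset.mul_sum]
  apply Finset.sum_le_sum
  intro l _
  simp only [one_pow, mul_one]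
  rw [mul_comm (h ^ l₀)]
  rcases le_or_gt l l₀ with hl | hl
  · exact mul_le_mul_of_nonneg_left (pow_le_pow_of_le_one h0 h1 hl) (hpos l hl).le
  · exact mul_le_mul_of_nonpos_left (pow_le_pow_of_le_one h0 h1 hl.le) (hneg l hl)
end

section
/- Let d ≥ 1, 0 ≤ k, m ≤ d, h ∈ [0,1), and define H_k(h) = ((h+1)/2)^{d-k} h^k. Then (1-h)·H_k'(h)·H_m'(h) - (1 - H_k(h))·(H_m'(h) - (1-h)·H_m''(h)) ≥ 0. -/
/-!
Write `H = mixedPow a k` with `a + k = d`. Two one-variable inequalities hold on `[0, 1]`: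
`(d - 1) H' ≤ (1 + h) H''`, because `(1 + h) H'' - (d - 1) H'` is a nonnegative combination of
monomials `((h+1)/2)^i h^j`; and `2 (1 - H) ≤ (1 - h) ((1 + h) H' + d (1 - H))`, from Bernoulli's
inequality for `((h+1)/2)^a` and the pairing `h^i + h^(k-1-i) ≤ 1 + h^(k-1)` in `∑_{i<k} h^i`.
After multiplying the target by `1 + h`, it is the sum of the first inequality for `H_m` weighted
by `(1 - h)(1 - H_k) ≥ 0` and the second for `H_k` weighted by `H_m' ≥ 0`.
-/

open Finset

lemma natCast_mul_pow_sub_one_mul {R : Type*} [Semiring R] (n : ℕ) (y : R) :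
    (n : R) * (y ^ (n - 1) * y) = n * y ^ n := by
  rcases eq_or_ne n 0 with rfl | hn
  · simp
  · rw [pow_sub_one_mul hn]

lemma natCast_mul_natCast_sub_one {R : Type*} [Ring R] (n : ℕ) :
    (n : R) * ((n - 1 : ℕ) : R) = n * (n - 1) := by
  rcases eq_or_ne n 0 with rfl | hn
  · simp
  · rw [Nat.cast_pred (Nat.pos_of_ne_zero hn)]

lemma two_mul_one_sub_pow_le {x : ℝ} (hx₀ : 0 ≤ x) (hx₁ : x ≤ 1) (n : ℕ) :
    2 * (1 - x ^ n) ≤ (1 - x) * (n * (1 + x ^ (n - 1))) := by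
  have hpairs : 0 ≤ ∑ i ∈ range n, (1 - x ^ i) * (1 - x ^ (n - 1 - i)) :=
    sum_nonneg fun i _ => mul_nonneg (sub_nonneg.2 (pow_le_one₀ hx₀ hx₁))
      (sub_nonneg.2 (pow_le_one₀ hx₀ hx₁))
  have hexpand : ∑ i ∈ range n, (1 - x ^ i) * (1 - x ^ (n - 1 - i))
      = n * (1 + x ^ (n - 1)) - 2 * ∑ i ∈ range n, x ^ i := by
    simp only [sub_mul, mul_sub, one_mul, mul_one, sum_sub_distrib, geom_sum₂_self,
      sum_range_reflect (x ^ ·) n, sum_const, card_range, nsmul_eq_mul]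
    ring
  have hgeom : 2 * ∑ i ∈ range n, x ^ i ≤ n * (1 + x ^ (n - 1)) := by linarith
  rw [← mul_neg_geom_sum]
  linarith [mul_le_mul_of_nonneg_left hgeom (sub_nonneg.2 hx₁)]

noncomputable def mixedPow (a k : ℕ) (x : ℝ) : ℝ := ((x + 1) / 2) ^ a * x ^ k

namespace mixedPow

variable (a k : ℕ) {x : ℝ}

lemma nonneg (hx : 0 ≤ x) : 0 ≤ mixedPow a k x := by
  unfold mixedPow
  positivity

lemma le_one (hx₀ : 0 ≤ x) (hx₁ : x ≤ 1) : mixedPow a k x ≤ 1 :=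
  mul_le_one₀ (pow_le_one₀ (by linarith) (by linarith)) (pow_nonneg hx₀ k) (pow_le_one₀ hx₀ hx₁)

lemma hasDerivAt (x : ℝ) :
    HasDerivAt (mixedPow a k) (a / 2 * mixedPow (a - 1) k x + k * mixedPow a (k - 1) x) x := by
  have hu : HasDerivAt (fun x : ℝ => (x + 1) / 2) (1 / 2) x :=
    ((hasDerivAt_id x).add_const 1).div_const 2
  refine ((hu.fun_pow a).mul (hasDerivAt_pow k x)).congr_deriv ?_
  unfold mixedPow
  ring

lemma deriv_eq :
    deriv (mixedPow a k) = fun x => a / 2 * mixedPow (a - 1) k x + k * mixedPow a (k - 1) x :=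
  funext fun x => (hasDerivAt a k x).deriv

lemma deriv_nonneg (hx : 0 ≤ x) : 0 ≤ deriv (mixedPow a k) x := by
  have := nonneg (a - 1) k hx
  have := nonneg a (k - 1) hx
  rw [deriv_eq]
  positivity

lemma deriv_deriv (x : ℝ) :
    deriv (deriv (mixedPow a k)) x
      = a / 2 * deriv (mixedPow (a - 1) k) x + k * deriv (mixedPow a (k - 1)) x := by
  rw [deriv_eq a k, deriv_eq, deriv_eq]
  exact (((hasDerivAt (a - 1) k x).const_mul _).fun_add
    ((hasDerivAt a (k - 1) x).const_mul _)).deriv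

lemma add_one_mul_deriv (x : ℝ) :
    (x + 1) * deriv (mixedPow a k) x = (a + k) * mixedPow a k x + k * mixedPow a (k - 1) x := by
  rw [deriv_eq]
  unfold mixedPow
  linear_combination x ^ k * natCast_mul_pow_sub_one_mul a ((x + 1) / 2)
    + ((x + 1) / 2) ^ a * natCast_mul_pow_sub_one_mul k x

lemma sub_one_mul_deriv_le_add_one_mul_deriv_deriv (hx : 0 ≤ x) :
    (a + k - 1) * deriv (mixedPow a k) x ≤ (x + 1) * deriv (deriv (mixedPow a k)) x := by
  have hgap : (x + 1) * deriv (deriv (mixedPow a k)) x - (a + k - 1) * deriv (mixedPow a k) x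
      = a * k / 2 * mixedPow (a - 1) (k - 1) x
        + k * ((k - 1 : ℕ) : ℝ) * mixedPow a (k - 1 - 1) x := by
    rw [deriv_deriv, mul_add, mul_left_comm, add_one_mul_deriv, mul_left_comm,
      add_one_mul_deriv, deriv_eq]
    linear_combination mixedPow (a - 1) k x / 2 * natCast_mul_natCast_sub_one (R := ℝ) a
      + mixedPow a (k - 1) x * natCast_mul_natCast_sub_one (R := ℝ) k
  have := nonneg (a - 1) (k - 1) hx
  have := nonneg a (k - 1 - 1) hx
  have : 0 ≤ a * k / 2 * mixedPow (a - 1) (k - 1) x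
      + k * ((k - 1 : ℕ) : ℝ) * mixedPow a (k - 1 - 1) x := by
    positivity
  linarith

lemma two_mul_one_sub_le (hx₀ : 0 ≤ x) (hx₁ : x ≤ 1) :
    2 * (1 - mixedPow a k x) ≤ (1 - x) * (a + k + k * mixedPow a (k - 1) x) := by
  have hu₀ : 0 ≤ (x + 1) / 2 := by positivity
  have hua : ((x + 1) / 2) ^ a ≤ 1 := pow_le_one₀ hu₀ (by linarith)
  have hbernoulli : 1 + a * ((x + 1) / 2 - 1) ≤ ((x + 1) / 2) ^ a := by
    simpa using one_add_mul_le_pow (show (-2 : ℝ) ≤ (x + 1) / 2 - 1 by linarith) a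
  have hxk := mul_le_mul_of_nonneg_left (two_mul_one_sub_pow_le hx₀ hx₁ k) (pow_nonneg hu₀ a)
  have hk : 0 ≤ (1 - x) * k * (1 - ((x + 1) / 2) ^ a) :=
    mul_nonneg (mul_nonneg (by linarith) k.cast_nonneg) (by linarith)
  unfold mixedPow
  linarith

lemma two_mul_one_sub_le_deriv (hx₀ : 0 ≤ x) (hx₁ : x ≤ 1) :
    2 * (1 - mixedPow a k x)
      ≤ (1 - x) * ((x + 1) * deriv (mixedPow a k) x + (a + k) * (1 - mixedPow a k x)) := by
  rw [add_one_mul_deriv]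
  linarith [two_mul_one_sub_le a k hx₀ hx₁]

end mixedPow

theorem pairwise_inequality_general (d k m : ℕ) (hk : k ≤ d) (hm : m ≤ d)
    (h : ℝ) (hh : h ∈ Set.Ico (0 : ℝ) 1) :
    (1 - h) * deriv (fun h : ℝ => ((h + 1) / 2) ^ (d - k) * h ^ k) h *
        deriv (fun h : ℝ => ((h + 1) / 2) ^ (d - m) * h ^ m) h -
      (1 - ((h + 1) / 2) ^ (d - k) * h ^ k) *
        (deriv (fun h : ℝ => ((h + 1) / 2) ^ (d - m) * h ^ m) h -
          (1 - h) * deriv (deriv (fun h : ℝ => ((h + 1) / 2) ^ (d - m) * h ^ m)) h) ≥ 0 := by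
  obtain ⟨h₀, h₁⟩ := hh
  change (1 - h) * deriv (mixedPow (d - k) k) h * deriv (mixedPow (d - m) m) h -
      (1 - mixedPow (d - k) k h) *
        (deriv (mixedPow (d - m) m) h - (1 - h) * deriv (deriv (mixedPow (d - m) m)) h) ≥ 0
  have hHk := mixedPow.two_mul_one_sub_le_deriv (d - k) k h₀ h₁.le
  have hHm := mixedPow.sub_one_mul_deriv_le_add_one_mul_deriv_deriv (d - m) m h₀
  rw [← Nat.cast_add, Nat.sub_add_cancel hk] at hHk
  rw [← Nat.cast_add, Nat.sub_add_cancel hm] at hHm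
  have hweight : 0 ≤ (1 - h) * (1 - mixedPow (d - k) k h) :=
    mul_nonneg (by linarith) (sub_nonneg.2 (mixedPow.le_one _ _ h₀ h₁.le))
  have hDm := mixedPow.deriv_nonneg (d - m) m h₀
  nlinarith [mul_le_mul_of_nonneg_left hHk hDm, mul_le_mul_of_nonneg_left hHm hweight]

/-- Lemma 2 of the paper: for `d ≥ 1`, `k, m ≤ d`, `h ∈ [0,1)`, with
`H_k(h) = ((h+1)/2)^(d-k) h^k`, we have
`(1-h)H_k'(h)H_m'(h) - (1-H_k(h))(H_m'(h) - (1-h)H_m''(h)) ≥ 0`. -/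
theorem pairwise_inequality (d k m : ℕ) (hd : 1 ≤ d) (hk : k ≤ d) (hm : m ≤ d)
    (h : ℝ) (hh : h ∈ Set.Ico (0 : ℝ) 1) :
    (1 - h) * deriv (fun h : ℝ => ((h + 1) / 2) ^ (d - k) * h ^ k) h *
        deriv (fun h : ℝ => ((h + 1) / 2) ^ (d - m) * h ^ m) h -
      (1 - ((h + 1) / 2) ^ (d - k) * h ^ k) *
        (deriv (fun h : ℝ => ((h + 1) / 2) ^ (d - m) * h ^ m) h -
          (1 - h) * deriv (deriv (fun h : ℝ => ((h + 1) / 2) ^ (d - m) * h ^ m)) h) ≥ 0 :=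
  pairwise_inequality_general d k m hk hm h hh
end

section
/- Let d ≥ 1 and P₀, ..., P_d ≥ 0 with Σ P_k = 1. Define H(h) = Σ_{k=0}^d P_k ((h+1)/2)^{d-k} h^k. Then for all h ∈ [0,1], (1-h)·H'(h)² - (1 - H(h))·(H'(h) - (1-h)·H''(h)) ≥ 0. -/
/-!
Write `H_k(x) = ((x+1)/2)^(d-k) x^k`, so that `H = ∑ P_k H_k`. Because `∑ P_k = 1`, the expression
is a quadratic form `∑_{j,k} P_j P_k B(j,k)` in the weights, and it suffices to show
`B(j,k) + B(k,j) ≥ 0` for pure terms. These satisfy `(x+1) x H_k' = (dx+k) H_k`, which turns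
`(1-x)((x+1)x)² (B(j,k) + B(k,j))` into `2 Y_j S_j Y_k S_k + (1-Y_j) Y_k R_k + (1-Y_k) Y_j R_j`
with `Y_k = H_k(x)`, `S_k = (1-x)(dx+k)` and `R_k = (1-x)² ((x+1)x)² H_k''/Y_k - (x+1)x S_k`,
a polynomial with `R_k ≥ -S_k x (dx-d+2)`. By the inequality
`(1 - Y_j)(dx-d+2) x ≤ S_j Y_j`, proved by induction on `d`, each of the last two terms is at
least `-Y_j S_j Y_k S_k`. The endpoints of `[0,1]` follow by continuity.
-/

open Finset
open scoped ContDiff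

lemma one_sub_pow_le_mul {t : ℝ} (ht : -1 ≤ t) (n : ℕ) : 1 - t ^ n ≤ n * (1 - t) := by
  have := one_add_mul_le_pow (a := t - 1) (by linarith) n
  simp only [add_sub_cancel] at this
  linarith

lemma natCast_mul_pow_pred_mul {R : Type*} [Semiring R] (n : ℕ) (a : R) :
    (n : R) * a ^ (n - 1) * a = n * a ^ n := by
  rcases n with _ | n <;> simp [pow_succ, mul_assoc]

lemma deriv_sum_const_mul {ι : Type*} (s : Finset ι) (c : ι → ℝ) {f : ι → ℝ → ℝ}
    (hf : ∀ i ∈ s, Differentiable ℝ (f i)) :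
    deriv (fun x => ∑ i ∈ s, c i * f i x) = fun x => ∑ i ∈ s, c i * deriv (f i) x := by
  funext x
  rw [deriv_fun_sum fun i hi => (hf i hi x).const_mul (c i)]
  exact sum_congr rfl fun i hi => deriv_const_mul _ (hf i hi x)

lemma sum_sum_mul_nonneg_of_add_swap_nonneg {ι : Type*} {s : Finset ι} {w : ι → ℝ}
    (hw : ∀ i ∈ s, 0 ≤ w i) (B : ι → ι → ℝ) (hB : ∀ i ∈ s, ∀ j ∈ s, 0 ≤ B i j + B j i) :
    0 ≤ ∑ i ∈ s, ∑ j ∈ s, w i * w j * B i j := by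
  have hswap : ∑ i ∈ s, ∑ j ∈ s, w i * w j * B i j = ∑ i ∈ s, ∑ j ∈ s, w i * w j * B j i := by
    rw [sum_comm]
    exact sum_congr rfl fun _ _ => sum_congr rfl fun _ _ => by ring
  have h2 : 0 ≤ 2 * ∑ i ∈ s, ∑ j ∈ s, w i * w j * B i j := by
    rw [two_mul]
    nth_rw 2 [hswap]
    simp only [← sum_add_distrib, ← mul_add]
    exact sum_nonneg fun i hi => sum_nonneg fun j hj =>
      mul_nonneg (mul_nonneg (hw i hi) (hw j hj)) (hB i hi j hj)
  linarith

/-- `pairForm (1 - x) H H' H' H''` is the expression of the theorem at `x`; on two pure terms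
`pairForm (1 - x) H_j H_j' H_k' H_k''` is the pairwise quantity `B(j,k)`. -/
def pairForm (t u u' v' v'' : ℝ) : ℝ := t * u' * v' - (1 - u) * (v' - t * v'')

lemma pairForm_sum {ι : Type*} {s : Finset ι} {w : ι → ℝ} (hw : ∑ i ∈ s, w i = 1)
    (t : ℝ) (u u' v' v'' : ι → ℝ) :
    pairForm t (∑ i ∈ s, w i * u i) (∑ i ∈ s, w i * u' i) (∑ j ∈ s, w j * v' j)
        (∑ j ∈ s, w j * v'' j)
      = ∑ i ∈ s, ∑ j ∈ s, w i * w j * pairForm t (u i) (u' i) (v' j) (v'' j) := by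
  have hu : 1 - ∑ i ∈ s, w i * u i = ∑ i ∈ s, w i * (1 - u i) := by
    simp only [mul_sub, mul_one, sum_sub_distrib, hw]
  have hv : ∑ j ∈ s, w j * v' j - t * ∑ j ∈ s, w j * v'' j = ∑ j ∈ s, w j * (v' j - t * v'' j) := by
    simp only [mul_sum, mul_sub, sum_sub_distrib, mul_left_comm t]
  rw [pairForm, hu, hv, mul_assoc, sum_mul_sum, sum_mul_sum, mul_sum, ← sum_sub_distrib]
  refine sum_congr rfl fun i _ => ?_
  rw [mul_sum, ← sum_sub_distrib]
  exact sum_congr rfl fun j _ => by rw [pairForm]; ring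

noncomputable def pureTerm (d k : ℕ) (x : ℝ) : ℝ := ((x + 1) / 2) ^ (d - k) * x ^ k

lemma contDiff_pureTerm (d k : ℕ) : ContDiff ℝ ∞ (pureTerm d k) := by
  unfold pureTerm; fun_prop

lemma differentiable_pureTerm (d k : ℕ) : Differentiable ℝ (pureTerm d k) :=
  (contDiff_infty_iff_deriv.1 (contDiff_pureTerm d k)).1

lemma differentiable_deriv_pureTerm (d k : ℕ) : Differentiable ℝ (deriv (pureTerm d k)) :=
  (contDiff_infty_iff_deriv.1 (contDiff_infty_iff_deriv.1 (contDiff_pureTerm d k)).2).1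

lemma mul_deriv_pureTerm {d k : ℕ} (hk : k ≤ d) (x : ℝ) :
    (x + 1) * x * deriv (pureTerm d k) x = (d * x + k) * pureTerm d k x := by
  have hlin : HasDerivAt (fun y : ℝ => (y + 1) / 2) (1 / 2) x := by
    simpa using ((hasDerivAt_id x).add_const 1).div_const 2
  have hderiv : HasDerivAt (pureTerm d k) _ x := (hlin.fun_pow (d - k)).fun_mul (hasDerivAt_pow k x)
  rw [hderiv.deriv, pureTerm]
  have ha := natCast_mul_pow_pred_mul (d - k) ((x + 1) / 2)
  have hx := natCast_mul_pow_pred_mul k x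
  rw [Nat.cast_sub hk] at ha ⊢
  linear_combination x ^ (k + 1) * ha + (x + 1) * ((x + 1) / 2) ^ (d - k) * hx

lemma sq_mul_deriv_deriv_pureTerm {d k : ℕ} (hk : k ≤ d) (x : ℝ) :
    ((x + 1) * x) ^ 2 * deriv (deriv (pureTerm d k)) x
      = ((d * x + k) ^ 2 - d * x ^ 2 - k * (2 * x + 1)) * pureTerm d k x := by
  have hode : (fun y => (y + 1) * y * deriv (pureTerm d k) y)
      = fun y => (d * y + k) * pureTerm d k y := funext (mul_deriv_pureTerm hk)
  have hdiff := congrArg (fun f => deriv f x) hode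
  rw [deriv_fun_mul (by fun_prop) (differentiable_deriv_pureTerm d k x),
    deriv_fun_mul (by fun_prop) (differentiable_pureTerm d k x)] at hdiff
  have hq : deriv (fun y : ℝ => (y + 1) * y) x = 2 * x + 1 := by
    rw [(((hasDerivAt_id' x).add_const 1).fun_mul (hasDerivAt_id' x)).deriv]; ring
  have hL : deriv (fun y : ℝ => d * y + k) x = d := by
    rw [(((hasDerivAt_id' x).const_mul (d : ℝ)).add_const (k : ℝ)).deriv]; simp
  rw [hq, hL] at hdiff
  linear_combination (x + 1) * x * hdiff - (2 * x + 1 - (d * x + k)) * mul_deriv_pureTerm hk x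

lemma one_sub_pureTerm_le {d k : ℕ} (hk : k ≤ d) {x : ℝ} (hx0 : 0 ≤ x) (hx1 : x ≤ 1) :
    1 - pureTerm d k x ≤ d * (1 - x) := by
  have ha := one_sub_pow_le_mul (t := (x + 1) / 2) (by linarith) (d - k)
  have hx := one_sub_pow_le_mul (by linarith : -1 ≤ x) k
  have ha1 : ((x + 1) / 2) ^ (d - k) ≤ 1 := pow_le_one₀ (by linarith) (by linarith)
  have hx1' : x ^ k ≤ 1 := pow_le_one₀ hx0 hx1
  rw [Nat.cast_sub hk] at ha
  have hkd : (k : ℝ) ≤ d := by exact_mod_cast hk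
  rw [pureTerm]
  nlinarith [mul_nonneg (sub_nonneg.2 ha1) (sub_nonneg.2 hx1')]

lemma one_sub_pureTerm_mul_le {x : ℝ} (hx0 : 0 ≤ x) (hx1 : x ≤ 1) {d k : ℕ} (hk : k ≤ d) :
    (1 - pureTerm d k x) * (d * x - d + 2) * x ≤ (1 - x) * (d * x + k) * pureTerm d k x := by
  induction d generalizing k with
  | zero =>
    obtain rfl : k = 0 := Nat.le_zero.1 hk
    simp [pureTerm]
  | succ d ih =>
    rcases k with _ | k
    · have ih := ih (Nat.zero_le d)
      have hY : pureTerm (d + 1) 0 x = (x + 1) / 2 * pureTerm d 0 x := by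
        simp only [pureTerm, Nat.sub_zero, pow_succ]; ring
      rw [hY]
      push_cast
      linarith [mul_nonneg (show 0 ≤ (x + 1) / 2 by linarith) (sub_nonneg.2 ih),
        mul_nonneg (mul_nonneg hx0 (sq_nonneg (1 - x))) (Nat.cast_nonneg (α := ℝ) d)]
    · have hk : k ≤ d := by omega
      have ih := ih hk
      have hub := one_sub_pureTerm_le hk hx0 hx1
      have hY : pureTerm (d + 1) (k + 1) x = x * pureTerm d k x := by
        simp only [pureTerm, Nat.add_sub_add_right, pow_succ]; ring
      rw [hY]
      push_cast
      linarith [mul_nonneg hx0 (sub_nonneg.2 ih),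
        mul_nonneg (mul_nonneg hx0 (sub_nonneg.2 hx1)) (sub_nonneg.2 hub)]

lemma pureTerm_nonneg (d k : ℕ) {x : ℝ} (hx0 : 0 ≤ x) : 0 ≤ pureTerm d k x := by
  unfold pureTerm; positivity

lemma pureTerm_le_one (d k : ℕ) {x : ℝ} (hx0 : 0 ≤ x) (hx1 : x ≤ 1) : pureTerm d k x ≤ 1 :=
  mul_le_one₀ (pow_le_one₀ (by linarith) (by linarith)) (pow_nonneg hx0 k) (pow_le_one₀ hx0 hx1)

lemma neg_mul_le_one_sub_pureTerm_mul {d j k : ℕ} (hj : j ≤ d) (hk : k ≤ d) {x : ℝ}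
    (hx0 : 0 ≤ x) (hx1 : x ≤ 1) :
    -(pureTerm d j x * ((1 - x) * (d * x + j)) * (pureTerm d k x * ((1 - x) * (d * x + k))))
      ≤ (1 - pureTerm d j x) * pureTerm d k x *
        ((1 - x) ^ 2 * ((d * x + k) ^ 2 - d * x ^ 2 - k * (2 * x + 1))
          - (x + 1) * x * ((1 - x) * (d * x + k))) := by
  have hkd : (k : ℝ) ≤ d := by exact_mod_cast hk
  have hk1 : 0 ≤ (k : ℝ) * (k - 1) := by
    rcases k with _ | k
    · simp
    · push_cast; nlinarith
  have hlower : -((1 - x) * (d * x + k) * x * (d * x - d + 2))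
      ≤ (1 - x) ^ 2 * ((d * x + k) ^ 2 - d * x ^ 2 - k * (2 * x + 1))
          - (x + 1) * x * ((1 - x) * (d * x + k)) := by
    linarith [mul_nonneg (mul_nonneg hk1 (by linarith : (0 : ℝ) ≤ x + 1)) (sq_nonneg (1 - x)),
      mul_nonneg (mul_nonneg (mul_nonneg (sub_nonneg.2 hkd) k.cast_nonneg) (sq_nonneg (1 - x))) hx0]
  have hYj := pureTerm_le_one d j hx0 hx1
  have hYk := pureTerm_nonneg d k hx0
  have hSk : 0 ≤ pureTerm d k x * ((1 - x) * (d * x + k)) := by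
    have := sub_nonneg.2 hx1; positivity
  have hkey := one_sub_pureTerm_mul_le hx0 hx1 hj
  calc -(pureTerm d j x * ((1 - x) * (d * x + j)) * (pureTerm d k x * ((1 - x) * (d * x + k))))
      ≤ -((1 - pureTerm d j x) * (d * x - d + 2) * x * (pureTerm d k x * ((1 - x) * (d * x + k)))) := by
        linarith [mul_le_mul_of_nonneg_right hkey hSk]
    _ = (1 - pureTerm d j x) * pureTerm d k x * -((1 - x) * (d * x + k) * x * (d * x - d + 2)) := by
        ring
    _ ≤ _ := mul_le_mul_of_nonneg_left hlower (mul_nonneg (sub_nonneg.2 hYj) hYk)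

lemma pureTerm_pairForm_add_swap_nonneg {d j k : ℕ} (hj : j ≤ d) (hk : k ≤ d) {x : ℝ}
    (hx0 : 0 < x) (hx1 : x < 1) :
    0 ≤ pairForm (1 - x) (pureTerm d j x) (deriv (pureTerm d j) x) (deriv (pureTerm d k) x)
          (deriv (deriv (pureTerm d k)) x)
      + pairForm (1 - x) (pureTerm d k x) (deriv (pureTerm d k) x) (deriv (pureTerm d j) x)
          (deriv (deriv (pureTerm d j)) x) := by
  have hq : (x + 1) * x ≠ 0 := by positivity
  have h1x : 1 - x ≠ 0 := by linarith
  have hD : ∀ {i}, i ≤ d → deriv (pureTerm d i) x = (d * x + i) * pureTerm d i x / ((x + 1) * x) :=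
    fun hi => by rw [eq_div_iff hq, mul_comm]; exact mul_deriv_pureTerm hi x
  have hDD : ∀ {i}, i ≤ d → deriv (deriv (pureTerm d i)) x
      = ((d * x + i) ^ 2 - d * x ^ 2 - i * (2 * x + 1)) * pureTerm d i x / ((x + 1) * x) ^ 2 :=
    fun hi => by rw [eq_div_iff (pow_ne_zero 2 hq), mul_comm]; exact sq_mul_deriv_deriv_pureTerm hi x
  have hjk := neg_mul_le_one_sub_pureTerm_mul hj hk hx0.le hx1.le
  have hkj := neg_mul_le_one_sub_pureTerm_mul hk hj hx0.le hx1.le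
  rw [hD hj, hD hk, hDD hj, hDD hk]
  set Yj := pureTerm d j x
  set Yk := pureTerm d k x
  have hsum : pairForm (1 - x) Yj ((d * x + j) * Yj / ((x + 1) * x)) ((d * x + k) * Yk / ((x + 1) * x))
          (((d * x + k) ^ 2 - d * x ^ 2 - k * (2 * x + 1)) * Yk / ((x + 1) * x) ^ 2)
      + pairForm (1 - x) Yk ((d * x + k) * Yk / ((x + 1) * x)) ((d * x + j) * Yj / ((x + 1) * x))
          (((d * x + j) ^ 2 - d * x ^ 2 - j * (2 * x + 1)) * Yj / ((x + 1) * x) ^ 2)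
      = (2 * (Yj * ((1 - x) * (d * x + j)) * (Yk * ((1 - x) * (d * x + k))))
          + (1 - Yj) * Yk * ((1 - x) ^ 2 * ((d * x + k) ^ 2 - d * x ^ 2 - k * (2 * x + 1))
            - (x + 1) * x * ((1 - x) * (d * x + k)))
          + (1 - Yk) * Yj * ((1 - x) ^ 2 * ((d * x + j) ^ 2 - d * x ^ 2 - j * (2 * x + 1))
            - (x + 1) * x * ((1 - x) * (d * x + j)))) / ((1 - x) * ((x + 1) * x) ^ 2) := by
    unfold pairForm
    field_simp
    ring
  rw [hsum]
  exact div_nonneg (by linarith) (by have := hx1.le; positivity)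

noncomputable def mixture (d : ℕ) (P : ℕ → ℝ) (x : ℝ) : ℝ :=
  ∑ k ∈ range (d + 1), P k * pureTerm d k x

lemma pairForm_mixture_nonneg {d : ℕ} {P : ℕ → ℝ} (hP : ∀ k, k ≤ d → 0 ≤ P k)
    (hsum : ∑ k ∈ range (d + 1), P k = 1) {x : ℝ} (hx : x ∈ Set.Icc (0 : ℝ) 1) :
    0 ≤ pairForm (1 - x) (mixture d P x) (deriv (mixture d P) x) (deriv (mixture d P) x)
      (deriv (deriv (mixture d P)) x) := by
  have hF : ContDiff ℝ ∞ (mixture d P) :=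
    ContDiff.sum fun k _ => contDiff_const.mul (contDiff_pureTerm d k)
  have hF' : ContDiff ℝ ∞ (deriv (mixture d P)) := (contDiff_infty_iff_deriv.1 hF).2
  have hD : deriv (mixture d P) = fun y => ∑ k ∈ range (d + 1), P k * deriv (pureTerm d k) y :=
    deriv_sum_const_mul _ P fun k _ => differentiable_pureTerm d k
  have hDD : deriv (deriv (mixture d P))
      = fun y => ∑ k ∈ range (d + 1), P k * deriv (deriv (pureTerm d k)) y := by
    rw [hD]; exact deriv_sum_const_mul _ P fun k _ => differentiable_deriv_pureTerm d k
  have hopen : ∀ y ∈ Set.Ioo (0 : ℝ) 1, 0 ≤ pairForm (1 - y) (mixture d P y)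
      (deriv (mixture d P) y) (deriv (mixture d P) y) (deriv (deriv (mixture d P)) y) := by
    rintro y ⟨hy0, hy1⟩
    rw [hDD, hD, mixture, pairForm_sum hsum]
    have hle : ∀ k ∈ range (d + 1), k ≤ d := fun k hk => Nat.lt_succ_iff.1 (mem_range.1 hk)
    exact sum_sum_mul_nonneg_of_add_swap_nonneg (fun k hk => hP k (hle k hk)) _
      fun j hj k hk => pureTerm_pairForm_add_swap_nonneg (hle j hj) (hle k hk) hy0 hy1
  have hcont : Continuous fun y => pairForm (1 - y) (mixture d P y) (deriv (mixture d P) y)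
      (deriv (mixture d P) y) (deriv (deriv (mixture d P)) y) := by
    have := hF.continuous
    have := hF.continuous_deriv (by simp)
    have := hF'.continuous_deriv (by simp)
    unfold pairForm; fun_prop
  rw [← closure_Ioo zero_ne_one] at hx
  exact closure_minimal hopen (isClosed_le continuous_const hcont) hx

theorem lemma_one_general (d : ℕ) (P : ℕ → ℝ) (hP : ∀ k, k ≤ d → 0 ≤ P k)
    (hsum : ∑ k ∈ Finset.range (d + 1), P k = 1)
    (h : ℝ) (hh : h ∈ Set.Icc (0 : ℝ) 1) :
    (1 - h) *
        (deriv (fun h : ℝ => ∑ k ∈ Finset.range (d + 1),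
          P k * ((h + 1) / 2) ^ (d - k) * h ^ k) h) ^ 2 -
      (1 - ∑ k ∈ Finset.range (d + 1), P k * ((h + 1) / 2) ^ (d - k) * h ^ k) *
        (deriv (fun h : ℝ => ∑ k ∈ Finset.range (d + 1),
            P k * ((h + 1) / 2) ^ (d - k) * h ^ k) h -
          (1 - h) * deriv (deriv (fun h : ℝ => ∑ k ∈ Finset.range (d + 1),
            P k * ((h + 1) / 2) ^ (d - k) * h ^ k)) h) ≥ 0 := by
  have hH : (fun h : ℝ => ∑ k ∈ Finset.range (d + 1), P k * ((h + 1) / 2) ^ (d - k) * h ^ k)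
      = mixture d P := by
    funext x; simp only [mixture, pureTerm, mul_assoc]
  have key := pairForm_mixture_nonneg hP hsum hh
  rw [hH, congrFun hH h]
  unfold pairForm at key
  linarith

/-- Lemma 1 of the paper: for `d ≥ 1`, `P_k ≥ 0` with `Σ P_k = 1`, and
`H(h) = Σ_{k=0}^d P_k ((h+1)/2)^(d-k) h^k`, for all `h ∈ [0,1]` we have
`(1-h)H'(h)² - (1-H(h))(H'(h) - (1-h)H''(h)) ≥ 0`. -/
theorem lemma_one (d : ℕ) (hd : 1 ≤ d) (P : ℕ → ℝ) (hP : ∀ k, k ≤ d → 0 ≤ P k)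
    (hsum : ∑ k ∈ Finset.range (d + 1), P k = 1)
    (h : ℝ) (hh : h ∈ Set.Icc (0 : ℝ) 1) :
    (1 - h) *
        (deriv (fun h : ℝ => ∑ k ∈ Finset.range (d + 1),
          P k * ((h + 1) / 2) ^ (d - k) * h ^ k) h) ^ 2 -
      (1 - ∑ k ∈ Finset.range (d + 1), P k * ((h + 1) / 2) ^ (d - k) * h ^ k) *
        (deriv (fun h : ℝ => ∑ k ∈ Finset.range (d + 1),
            P k * ((h + 1) / 2) ^ (d - k) * h ^ k) h -
          (1 - h) * deriv (deriv (fun h : ℝ => ∑ k ∈ Finset.range (d + 1),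
            P k * ((h + 1) / 2) ^ (d - k) * h ^ k)) h) ≥ 0 :=
  lemma_one_general d P hP hsum h hh
end

section
/- Let P : (0,∞) → (0, 1/2] be a function such that P in log scale is concave in log-SNR (i.e., t ↦ log P(e^t) is concave), P is nonincreasing, and P(γ)·γ^D → K as γ → ∞ for some constants K, D > 0. Then P(γ) ≤ min{1/2, K/γ^D} for all γ > 0. -/
open Filter

/-- If `P : (0,∞) → (0,1/2]` is log-concave in log-SNR, nonincreasing, and
`P(γ)·γ^D → K` as `γ → ∞` with `K, D > 0`, then `P(γ) ≤ min{1/2, K/γ^D}` for all `γ > 0`. -/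
theorem asymptotic_upper_bound (P : ℝ → ℝ) (K D : ℝ) (hK : 0 < K) (hD : 0 < D)
    (hrange : ∀ γ, 0 < γ → P γ ∈ Set.Ioc (0 : ℝ) (1 / 2))
    (hconc : ConcaveOn ℝ Set.univ (fun t : ℝ => Real.log (P (Real.exp t))))
    (hmono : ∀ γ₁ γ₂, 0 < γ₁ → γ₁ ≤ γ₂ → P γ₂ ≤ P γ₁)
    (hlim : Tendsto (fun γ : ℝ => P γ * γ ^ D) atTop (nhds K)) :
    ∀ γ, 0 < γ → P γ ≤ min (1 / 2) (K / γ ^ D) := by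
  set f : ℝ → ℝ := fun t => Real.log (P (Real.exp t)) with hf
  have hPpos : ∀ t : ℝ, 0 < P (Real.exp t) := fun t => (hrange _ (Real.exp_pos t)).1
  have hglim : Tendsto (fun t : ℝ => f t + D * t) atTop (nhds (Real.log K)) := by
    have h1 : Tendsto (fun t : ℝ => P (Real.exp t) * (Real.exp t) ^ D) atTop (nhds K) :=
      hlim.comp Real.tendsto_exp_atTop
    have h2 := (Real.continuousAt_log (ne_of_gt hK)).tendsto.comp h1
    refine h2.congr fun t => ?_
    simp only [Function.comp]
    rw [Real.log_mul (hPpos t).ne' (by positivity), Real.log_rpow (Real.exp_pos t), Real.log_exp,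
      mul_comm]
  have key : ∀ t : ℝ, f t + D * t ≤ Real.log K := by
    intro t₀
    by_contra hcon
    push_neg at hcon
    set ε := f t₀ + D * t₀ - Real.log K with hε
    have hεpos : 0 < ε := by linarith
    obtain ⟨t₁, ht₁gt, ht₁⟩ : ∃ t₁, t₀ < t₁ ∧ f t₁ + D * t₁ < Real.log K + ε / 2 := by
      have h := hglim.eventually (gt_mem_nhds (show Real.log K < Real.log K + ε / 2 by linarith))
      obtain ⟨t₁, h1, h2⟩ := (h.and (eventually_gt_atTop t₀)).exists
      exact ⟨t₁, h2, h1⟩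
    set s : ℝ := (f t₁ + D * t₁ - (f t₀ + D * t₀)) / (t₁ - t₀) with hs
    have ht₁t₀ : 0 < t₁ - t₀ := by linarith
    have hsneg : s < 0 := div_neg_of_neg_of_pos (by linarith) ht₁t₀
    -- pick t₂ large
    obtain ⟨t₂, h2a, h2b⟩ :=
      ((hglim.eventually (lt_mem_nhds (show Real.log K - 1 < Real.log K by linarith))).and
        (eventually_ge_atTop (max (t₁ + 1) (t₁ + (Real.log K - 1 - (f t₁ + D * t₁)) / s)))).exists
    have ht₂gt : t₁ < t₂ := lt_of_lt_of_le (by linarith) (le_trans (le_max_left _ _) h2b)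
    have hslope := hconc.slope_anti_adjacent (Set.mem_univ t₀) (Set.mem_univ t₂) ht₁gt ht₂gt
    -- slope of g
    have hgslope : (f t₂ + D * t₂ - (f t₁ + D * t₁)) / (t₂ - t₁) ≤ s := by
      have ht₂t₁ : 0 < t₂ - t₁ := by linarith
      rw [hs]
      have e1 : (f t₂ + D * t₂ - (f t₁ + D * t₁)) / (t₂ - t₁)
          = (f t₂ - f t₁) / (t₂ - t₁) + D := by field_simp; ring
      have e2 : (f t₁ + D * t₁ - (f t₀ + D * t₀)) / (t₁ - t₀)
          = (f t₁ - f t₀) / (t₁ - t₀) + D := by field_simp; ring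
      rw [e1, e2]
      linarith
    have ht₂t₁ : 0 < t₂ - t₁ := by linarith
    have hbound : f t₂ + D * t₂ ≤ f t₁ + D * t₁ + (t₂ - t₁) * s := by
      have := (div_le_iff₀ ht₂t₁).mp hgslope
      linarith [this]
    have ht₂ge : t₁ + (Real.log K - 1 - (f t₁ + D * t₁)) / s ≤ t₂ :=
      le_trans (le_max_right _ _) h2b
    -- from ht₂ge : (t₂ - t₁) * s ≤ log K - 1 - (f t₁ + D*t₁)  (since s < 0)
    have h3 : (t₂ - t₁) * s ≤ Real.log K - 1 - (f t₁ + D * t₁) := by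
      have h4 : (Real.log K - 1 - (f t₁ + D * t₁)) / s ≤ t₂ - t₁ := by linarith
      calc (t₂ - t₁) * s ≤ ((Real.log K - 1 - (f t₁ + D * t₁)) / s) * s := by
            exact mul_le_mul_of_nonpos_right h4 (le_of_lt hsneg)
        _ = Real.log K - 1 - (f t₁ + D * t₁) := div_mul_cancel₀ _ (ne_of_lt hsneg)
    linarith
  intro γ hγ
  refine le_min (hrange γ hγ).2 ?_
  have ht := key (Real.log γ)
  simp only [hf, Real.exp_log hγ] at ht
  have : Real.log (P γ) ≤ Real.log (K / γ ^ D) := by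
    rw [Real.log_div (ne_of_gt hK) (by positivity), Real.log_rpow hγ]
    linarith
  have hpos : (0:ℝ) < K / γ ^ D := by positivity
  exact (Real.log_le_log_iff (hrange γ hγ).1 hpos).mp this
end
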